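/- The coordinate projections P₀ and P₁ are injective on Z. Consequently the assignment T(P₀ z) := P₁ z (for z ∈ Z) defines an injective linear operator T with domain P₀(Z) ⊆ Z₀ and range P₁(Z) ⊆ Z₁; its domain is dense in Z₀, its range is dense in Z₁, and its graph G(T) = {(P₀ z, P₁ z) : z ∈ Z} coincides with Z, hence is closed in H₀ ⊕₂ H₁; in particular T is a closed densely defined operator from Z₀ to Z₁. -/

import Mathlib

open scoped InnerProductSpace

variable {H₀ H₁ : Type*} [NormedAddCommGroup H₀] [InnerProductSpace ℂ H₀] [CompleteSpace H₀]
  [NormedAddCommGroup H₁] [InnerProductSpace ℂ H₁] [CompleteSpace H₁]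

/-- First coordinate projection `H₀ ⊕₂ H₁ → H₀` as a linear map. -/
noncomputable def P0 : WithLp 2 (H₀ × H₁) →ₗ[ℂ] H₀ :=
  (LinearMap.fst ℂ H₀ H₁) ∘ₗ (WithLp.linearEquiv 2 ℂ (H₀ × H₁)).toLinearMap

/-- Second coordinate projection `H₀ ⊕₂ H₁ → H₁` as a linear map. -/
noncomputable def P1 : WithLp 2 (H₀ × H₁) →ₗ[ℂ] H₁ :=
  (LinearMap.snd ℂ H₀ H₁) ∘ₗ (WithLp.linearEquiv 2 ℂ (H₀ × H₁)).toLinearMap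

/-- The graph `G(T) = {(x, T x) : x ∈ dom}` of an operator `T` with domain
`dom ⊆ H₀` and values in `H₁`, as a subspace of `H₀ ⊕₂ H₁`. -/
noncomputable def graphSub (dom : Submodule ℂ H₀) (T : dom →ₗ[ℂ] H₁) :
    Submodule ℂ (WithLp 2 (H₀ × H₁)) :=
  LinearMap.range ((WithLp.linearEquiv 2 ℂ (H₀ × H₁)).symm.toLinearMap ∘ₗ (dom.subtype.prod T))

/-! Since `⟪A y, y'⟫ = ⟪P₀ y, P₀ y'⟫` and `⟪y, y'⟫ = ⟪P₀ y, P₀ y'⟫ + ⟪P₁ y, P₁ y'⟫`, a vector of `Y`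
killed by `P₀` lies in `ker A` and one killed by `P₁` lies in `ker (1 - A)`. Both kernels are
orthogonal to `Z`, so `P₀` and `P₁` are injective on `Z`, and `Z` is the graph of the operator
`P₀ z ↦ P₁ z`. It is closed as an orthogonal complement inside the closed subspace `Y`. -/

namespace Submodule

variable {R M N P : Type*} [Semiring R] [AddCommMonoid M] [AddCommMonoid N] [AddCommMonoid P]
  [Module R M] [Module R N] [Module R P]

noncomputable def equivMapOfInjOn (W : Submodule R M) (f : M →ₗ[R] N) (hf : Set.InjOn f W) :
    W ≃ₗ[R] W.map f :=
  LinearEquiv.ofBijective (f.submoduleMap W)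
    ⟨fun a b hab => Subtype.ext (hf a.2 b.2 (congrArg Subtype.val hab)),
      f.submoduleMap_surjective W⟩

noncomputable def operatorOfInjOn (W : Submodule R M) (f : M →ₗ[R] N) (g : M →ₗ[R] P)
    (hf : Set.InjOn f W) : W.map f →ₗ[R] P :=
  g ∘ₗ W.subtype ∘ₗ (W.equivMapOfInjOn f hf).symm.toLinearMap

variable (W : Submodule R M) (f : M →ₗ[R] N) (g : M →ₗ[R] P) (hf : Set.InjOn f W)

theorem operatorOfInjOn_apply_equivMapOfInjOn (w : W) :
    W.operatorOfInjOn f g hf (W.equivMapOfInjOn f hf w) = g w := by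
  simp [operatorOfInjOn]

theorem operatorOfInjOn_apply {x : M} (hx : x ∈ W) (h : f x ∈ W.map f) :
    W.operatorOfInjOn f g hf ⟨f x, h⟩ = g x :=
  W.operatorOfInjOn_apply_equivMapOfInjOn f g hf ⟨x, hx⟩

theorem injective_operatorOfInjOn (hg : Set.InjOn g W) :
    Function.Injective (W.operatorOfInjOn f g hf) :=
  (show Function.Injective (g ∘ₗ W.subtype) from fun a b hab => Subtype.ext (hg a.2 b.2 hab)).comp
    (W.equivMapOfInjOn f hf).symm.injective

theorem range_operatorOfInjOn : LinearMap.range (W.operatorOfInjOn f g hf) = W.map g := by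
  rw [operatorOfInjOn, LinearMap.range_comp,
    LinearMap.range_comp_of_range_eq_top _ (LinearEquiv.range _), range_subtype]

theorem injOn_orthogonal_of_ker_le {𝕜 E F : Type*} [RCLike 𝕜] [NormedAddCommGroup E]
    [InnerProductSpace 𝕜 E] [AddCommGroup F] [Module 𝕜 F] {K : Submodule 𝕜 E} {f : E →ₗ[𝕜] F}
    (h : LinearMap.ker f ≤ K) : Set.InjOn f Kᗮ :=
  LinearMap.disjoint_ker_iff_injOn.mp ((orthogonal_disjoint K).symm.mono_right h)

theorem isClosed_map_subtype {E : Type*} [TopologicalSpace E] [AddCommMonoid E]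
    [Module R E] {Y : Submodule R E} (hY : IsClosed (Y : Set E)) {K : Submodule R Y}
    (hK : IsClosed (K : Set Y)) : IsClosed (K.map Y.subtype : Set E) :=
  hY.isClosedEmbedding_subtypeVal.isClosedMap _ hK

end Submodule

section DirectSum

variable {E₀ E₁ : Type*} [NormedAddCommGroup E₀] [InnerProductSpace ℂ E₀]
  [NormedAddCommGroup E₁] [InnerProductSpace ℂ E₁]

theorem graphSub_operatorOfInjOn (W : Submodule ℂ (WithLp 2 (E₀ × E₁)))
    (hW : Set.InjOn P0 (W : Set (WithLp 2 (E₀ × E₁)))) :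
    graphSub (W.map P0) (W.operatorOfInjOn P0 P1 hW) = W := by
  have hgraph : ((WithLp.linearEquiv 2 ℂ (E₀ × E₁)).symm.toLinearMap ∘ₗ
      ((W.map P0).subtype.prod (W.operatorOfInjOn P0 P1 hW))) ∘ₗ
      (W.equivMapOfInjOn P0 hW).toLinearMap = W.subtype := by
    ext w
    change WithLp.toLp 2 (P0 (w : WithLp 2 (E₀ × E₁)),
      W.operatorOfInjOn P0 P1 hW (W.equivMapOfInjOn P0 hW w)) = w
    rw [Submodule.operatorOfInjOn_apply_equivMapOfInjOn]
    rfl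
  conv_rhs => rw [← W.range_subtype, ← hgraph]
  exact (LinearMap.range_comp_of_range_eq_top _ (LinearEquiv.range _)).symm

variable {Y : Submodule ℂ (WithLp 2 (E₀ × E₁))} {A : Y →L[ℂ] Y}

theorem ker_P0_comp_subtype_le_ker
    (hA : ∀ x y : Y, ⟪A x, y⟫_ℂ = ⟪P0 (x : WithLp 2 (E₀ × E₁)), P0 (y : WithLp 2 (E₀ × E₁))⟫_ℂ) :
    LinearMap.ker (P0 ∘ₗ Y.subtype) ≤ LinearMap.ker (A : Y →ₗ[ℂ] Y) :=
  fun z (hz : P0 (z : WithLp 2 (E₀ × E₁)) = 0) =>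
  show A z = 0 from ext_inner_right ℂ fun y => by
    rw [hA, hz, inner_zero_left, inner_zero_left]

theorem ker_P1_comp_subtype_le_ker_one_sub
    (hA : ∀ x y : Y, ⟪A x, y⟫_ℂ = ⟪P0 (x : WithLp 2 (E₀ × E₁)), P0 (y : WithLp 2 (E₀ × E₁))⟫_ℂ) :
    LinearMap.ker (P1 ∘ₗ Y.subtype) ≤ LinearMap.ker ((1 - A : Y →L[ℂ] Y) : Y →ₗ[ℂ] Y) :=
  fun z (hz : P1 (z : WithLp 2 (E₀ × E₁)) = 0) => by
    have hAz : A z = z := ext_inner_right ℂ fun y => by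
      have hinner : ⟪z, y⟫_ℂ = ⟪P0 (z : WithLp 2 (E₀ × E₁)), P0 (y : WithLp 2 (E₀ × E₁))⟫_ℂ +
          ⟪P1 (z : WithLp 2 (E₀ × E₁)), P1 (y : WithLp 2 (E₀ × E₁))⟫_ℂ := rfl
      rw [hA, hinner, hz, inner_zero_left, add_zero]
    simp [hAz]

end DirectSum

/-- `P₀` and `P₁` are injective on `Z`, and `T (P₀ z) := P₁ z` defines an injective linear
operator with domain `P₀(Z) ⊆ Z₀`, range `P₁(Z) ⊆ Z₁`, dense domain in `Z₀`, dense range in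
`Z₁`, whose graph coincides with `Z` (viewed in `H₀ ⊕₂ H₁`), hence is closed: `T` is a closed
densely defined operator from `Z₀` to `Z₁`. -/
theorem stmt_7 (Y : Submodule ℂ (WithLp 2 (H₀ × H₁)))
    (hY : IsClosed (Y : Set (WithLp 2 (H₀ × H₁))))
    (A : Y →L[ℂ] Y)
    (hA : ∀ x y : Y,
      ⟪A x, y⟫_ℂ = ⟪P0 (x : WithLp 2 (H₀ × H₁)), P0 (y : WithLp 2 (H₀ × H₁))⟫_ℂ)
    (Y₀ Y₁ Z : Submodule ℂ Y)
    (hY₀ : Y₀ = LinearMap.ker ((1 - A : Y →L[ℂ] Y) : Y →ₗ[ℂ] Y)) (hY₁ : Y₁ = LinearMap.ker (A : Y →ₗ[ℂ] Y))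
    (hZ : Z = (Y₀ ⊔ Y₁)ᗮ)
    (Zx : Submodule ℂ (WithLp 2 (H₀ × H₁))) (hZx : Zx = Submodule.map Y.subtype Z)
    (dom : Submodule ℂ H₀) (hdom : dom = Submodule.map P0 Zx)
    (ran : Submodule ℂ H₁) (hran : ran = Submodule.map P1 Zx)
    (Z₀ : Submodule ℂ H₀) (hZ₀ : Z₀ = (Submodule.map (P0 ∘ₗ Y.subtype) Z).topologicalClosure)
    (Z₁ : Submodule ℂ H₁) (hZ₁ : Z₁ = (Submodule.map (P1 ∘ₗ Y.subtype) Z).topologicalClosure) :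
    Set.InjOn (fun z : Y => P0 (z : WithLp 2 (H₀ × H₁))) (Z : Set Y) ∧
    Set.InjOn (fun z : Y => P1 (z : WithLp 2 (H₀ × H₁))) (Z : Set Y) ∧
    ∃ T : dom →ₗ[ℂ] H₁,
      (∀ z : Y, z ∈ Z → ∀ h : P0 (z : WithLp 2 (H₀ × H₁)) ∈ dom,
        T ⟨P0 (z : WithLp 2 (H₀ × H₁)), h⟩ = P1 (z : WithLp 2 (H₀ × H₁))) ∧
      Function.Injective T ∧
      LinearMap.range T = ran ∧
      dom ≤ Z₀ ∧ dom.topologicalClosure = Z₀ ∧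
      ran ≤ Z₁ ∧ ran.topologicalClosure = Z₁ ∧
      graphSub dom T = Zx ∧
      IsClosed (Zx : Set (WithLp 2 (H₀ × H₁))) := by
  subst hY₀ hY₁ hZx hdom hran hZ₀ hZ₁
  have hP0 : Set.InjOn (P0 ∘ₗ Y.subtype) Z := hZ ▸ Submodule.injOn_orthogonal_of_ker_le
    ((ker_P0_comp_subtype_le_ker hA).trans le_sup_right)
  have hP1 : Set.InjOn (P1 ∘ₗ Y.subtype) Z := hZ ▸ Submodule.injOn_orthogonal_of_ker_le
    ((ker_P1_comp_subtype_le_ker_one_sub hA).trans le_sup_left)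
  set W := Z.map Y.subtype
  have hW0 : Set.InjOn P0 (W : Set (WithLp 2 (H₀ × H₁))) :=
    Set.InjOn.image_of_comp (f := Y.subtype) hP0
  have hW1 : Set.InjOn P1 (W : Set (WithLp 2 (H₀ × H₁))) :=
    Set.InjOn.image_of_comp (f := Y.subtype) hP1
  refine ⟨hP0, hP1, W.operatorOfInjOn P0 P1 hW0,
    fun z hz => W.operatorOfInjOn_apply P0 P1 hW0 ⟨z, hz, rfl⟩,
    W.injective_operatorOfInjOn P0 P1 hW0 hW1, W.range_operatorOfInjOn P0 P1 hW0, ?_, ?_, ?_, ?_,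
    graphSub_operatorOfInjOn W hW0,
    Submodule.isClosed_map_subtype hY (hZ ▸ Submodule.isClosed_orthogonal _)⟩
  all_goals simp only [W, ← Submodule.map_comp, Submodule.le_topologicalClosure]
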